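/- arXiv:2003.08967 — 2 statements merged into one kernel-verified Lean document; each statement's English description precedes it below -/
import Mathlib

section
/- Let U be a random vector taking values in the nonnegative orthant of ℝ^n, Y = 𝒫(U), and suppose E[U | Y = y] = H y + c for every y ∈ ℤ^n_{≥0}, for some matrix H ∈ ℝ^{n×n} and vector c ∈ ℝ^n. Then for every i ∈ [1:n], c_i = P_Y(1_i)/P_Y(0) = E[U_i e^{−Σ_{j=1}^n U_j}] / E[e^{−Σ_{j=1}^n U_j}]; consequently c_i = 0 if U_i = 0 almost surely, and c_i > 0 otherwise. -/
open MeasureTheory ProbabilityTheory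

noncomputable section

/-- The probability mass function of the Poisson distribution with (real) mean `m`,
evaluated at `k` (with the convention `0 ^ 0 = 1`). -/
def poissonP (m : ℝ) (k : ℕ) : ℝ := m ^ k * Real.exp (-m) / (Nat.factorial k)

/-- `Y = 𝒫(U)` : `U` takes values in the nonnegative orthant and, conditionally on `U = u`,
the coordinates of `Y` are independent with `Y i` Poisson distributed with mean `u i`. -/
def IsPoissonObs {Ω : Type} [MeasurableSpace Ω] (μ : Measure Ω) {n : ℕ}
    (U : Ω → Fin n → ℝ) (Y : Ω → Fin n → ℕ) : Prop :=
  Measurable U ∧ Measurable Y ∧ (∀ ω i, 0 ≤ U ω i) ∧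
    ∀ (y : Fin n → ℕ) (B : Set (Fin n → ℝ)), MeasurableSet B →
      (μ {ω | Y ω = y ∧ U ω ∈ B}).toReal
        = ∫ ω in {ω | U ω ∈ B}, ∏ i, poissonP (U ω i) (y i) ∂μ

/-- Conditional expectation of `f` given the event `A`. -/
def condExpEvent {Ω : Type} [MeasurableSpace Ω] (μ : Measure Ω) (A : Set Ω)
    (f : Ω → ℝ) : ℝ :=
  (∫ ω in A, f ω ∂μ) / (μ A).toReal

/-!
Conditionally on `Y = y`, the law of `U` has density `u ↦ P(𝒫(u) = y)` with respect to the law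
of `U` (Bayes). For `y = 0` this density is `e^{-∑ u_j}`, and the linear regression at `y = 0`
is its intercept `c`, so `c_i = E[U_i e^{-∑ U_j}] / E[e^{-∑ U_j}]`. The numerator and the
denominator are `P(Y = 1_i)` and `P(Y = 0)`, the likelihoods of `1_i` and `0` averaged over `U`.
Since `e^{-∑ U_j} > 0`, the numerator vanishes exactly when `U_i = 0` almost surely.
-/

open Finset Real

lemma poissonP_nonneg {m : ℝ} (hm : 0 ≤ m) (k : ℕ) : 0 ≤ poissonP m k := by
  unfold poissonP; positivity

lemma poissonP_le_one {m : ℝ} (hm : 0 ≤ m) (k : ℕ) : poissonP m k ≤ 1 := by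
  rw [poissonP, mul_div_right_comm, ← le_div_iff₀ (exp_pos _), exp_neg, div_inv_eq_mul,
    one_mul]
  exact pow_div_factorial_le_exp _ hm k

section Likelihood

variable {n : ℕ}

def poissonLikelihood (y : Fin n → ℕ) (u : Fin n → ℝ) : ℝ := ∏ k, poissonP (u k) (y k)

@[fun_prop]
lemma measurable_poissonLikelihood (y : Fin n → ℕ) : Measurable (poissonLikelihood y) := by
  unfold poissonLikelihood poissonP; fun_prop

lemma poissonLikelihood_nonneg (y : Fin n → ℕ) {u : Fin n → ℝ} (hu : 0 ≤ u) :
    0 ≤ poissonLikelihood y u :=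
  prod_nonneg fun k _ => poissonP_nonneg (hu k) _

lemma poissonLikelihood_le_one (y : Fin n → ℕ) {u : Fin n → ℝ} (hu : 0 ≤ u) :
    poissonLikelihood y u ≤ 1 :=
  prod_le_one (fun k _ => poissonP_nonneg (hu k) _) fun k _ => poissonP_le_one (hu k) _

lemma poissonLikelihood_zero (u : Fin n → ℝ) : poissonLikelihood 0 u = exp (-∑ k, u k) := by
  simp [poissonLikelihood, poissonP, ← exp_sum]

lemma poissonLikelihood_single (i : Fin n) (u : Fin n → ℝ) :
    poissonLikelihood (Pi.single i 1) u = u i * exp (-∑ k, u k) := by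
  have h (k : Fin n) :
      poissonP (u k) ((Pi.single i 1 : Fin n → ℕ) k) = (if k = i then u k else 1) * exp (-u k) := by
    rcases eq_or_ne k i with rfl | h <;> simp [poissonP, *]
  simp only [poissonLikelihood, h, prod_mul_distrib, prod_ite_eq', mem_univ, if_true, ← exp_sum,
    sum_neg_distrib]

end Likelihood

namespace IsPoissonObs

variable {Ω : Type} [MeasurableSpace Ω] {μ : Measure Ω} {n : ℕ} {U : Ω → Fin n → ℝ}
  {Y : Ω → Fin n → ℕ}

lemma integrable_poissonLikelihood [IsFiniteMeasure μ] (hPo : IsPoissonObs μ U Y)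
    (y : Fin n → ℕ) : Integrable (fun ω => poissonLikelihood y (U ω)) μ := by
  obtain ⟨hU, -, hU0, -⟩ := hPo
  refine (integrable_const (1 : ℝ)).mono'
    ((measurable_poissonLikelihood y).comp hU).aestronglyMeasurable (ae_of_all _ fun ω => ?_)
  rw [Real.norm_of_nonneg (poissonLikelihood_nonneg y (hU0 ω))]
  exact poissonLikelihood_le_one y (hU0 ω)

lemma measureReal_eq_integral (hPo : IsPoissonObs μ U Y) (y : Fin n → ℕ) :
    (μ {ω | Y ω = y}).toReal = ∫ ω, poissonLikelihood y (U ω) ∂μ := by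
  simpa [poissonLikelihood] using hPo.2.2.2 y Set.univ MeasurableSet.univ

lemma map_restrict_eq_withDensity [IsFiniteMeasure μ] (hPo : IsPoissonObs μ U Y)
    (y : Fin n → ℕ) :
    (μ.restrict {ω | Y ω = y}).map U
      = (μ.map U).withDensity fun u => ENNReal.ofReal (poissonLikelihood y u) := by
  obtain ⟨hU, -, hU0, hjoint⟩ := id hPo
  ext B hB
  rw [Measure.map_apply hU hB, Measure.restrict_apply (hU hB), withDensity_apply _ hB,
    setLIntegral_map hB (by fun_prop) hU,
    ← ofReal_integral_eq_lintegral_ofReal (hPo.integrable_poissonLikelihood y).restrict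
      (ae_of_all _ fun ω => poissonLikelihood_nonneg y (hU0 ω)),
    Set.inter_comm]
  exact (ENNReal.ofReal_toReal (measure_ne_top _ _)).symm.trans
    (congrArg ENNReal.ofReal (hjoint y B hB))

lemma setIntegral_comp_eq_integral_mul [IsFiniteMeasure μ] (hPo : IsPoissonObs μ U Y)
    (y : Fin n → ℕ) {f : (Fin n → ℝ) → ℝ} (hf : Measurable f) :
    ∫ ω in {ω | Y ω = y}, f (U ω) ∂μ = ∫ ω, f (U ω) * poissonLikelihood y (U ω) ∂μ := by
  have hU := hPo.1
  rw [← integral_map hU.aemeasurable hf.aestronglyMeasurable, hPo.map_restrict_eq_withDensity,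
    integral_withDensity_eq_integral_toReal_smul (by fun_prop)
      (ae_of_all _ fun _ => ENNReal.ofReal_lt_top),
    integral_map hU.aemeasurable (by fun_prop)]
  congr 1 with ω
  rw [ENNReal.toReal_ofReal (poissonLikelihood_nonneg y (hPo.2.2.1 ω)), smul_eq_mul, mul_comm]

lemma condExpEvent_eq [IsFiniteMeasure μ] (hPo : IsPoissonObs μ U Y) (y : Fin n → ℕ)
    {f : (Fin n → ℝ) → ℝ} (hf : Measurable f) :
    condExpEvent μ {ω | Y ω = y} (fun ω => f (U ω))
      = (∫ ω, f (U ω) * poissonLikelihood y (U ω) ∂μ) / ∫ ω, poissonLikelihood y (U ω) ∂μ := by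
  rw [condExpEvent, hPo.setIntegral_comp_eq_integral_mul y hf, hPo.measureReal_eq_integral]

end IsPoissonObs

lemma integral_mul_eq_zero_iff_of_pos {Ω : Type*} [MeasurableSpace Ω] {μ : Measure Ω}
    {f g : Ω → ℝ} (hf : 0 ≤ f) (hg : ∀ ω, 0 < g ω) (hfg : Integrable (fun ω => f ω * g ω) μ) :
    ∫ ω, f ω * g ω ∂μ = 0 ↔ ∀ᵐ ω ∂μ, f ω = 0 := by
  rw [integral_eq_zero_iff_of_nonneg (fun ω => mul_nonneg (hf ω) (hg ω).le) hfg]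
  refine Filter.eventually_congr (ae_of_all _ fun ω => ?_)
  simp [(hg ω).ne']

/-- if `Y = 𝒫(U)` and `E[U | Y = y] = H y + c` for all `y`, then
`c i = P_Y(1_i)/P_Y(0) = E[U_i e^{-∑ U_j}]/E[e^{-∑ U_j}]`; consequently `c i = 0`
if `U_i = 0` almost surely, and `c i > 0` otherwise. -/
theorem stmt3 {Ω : Type} [MeasurableSpace Ω] (μ : Measure Ω) [IsProbabilityMeasure μ]
    {n : ℕ} (U : Ω → Fin n → ℝ) (Y : Ω → Fin n → ℕ)
    (hPo : IsPoissonObs μ U Y)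
    (H : Matrix (Fin n) (Fin n) ℝ) (c : Fin n → ℝ)
    (hlin : ∀ y : Fin n → ℕ, μ {ω | Y ω = y} ≠ 0 → ∀ i,
      condExpEvent μ {ω | Y ω = y} (fun ω => U ω i) = ∑ j, H i j * (y j : ℝ) + c i) :
    ∀ i : Fin n,
      c i = (μ {ω | Y ω = Pi.single i 1}).toReal / (μ {ω | Y ω = (0 : Fin n → ℕ)}).toReal
      ∧ c i = (∫ ω, U ω i * Real.exp (-∑ j, U ω j) ∂μ)
                / (∫ ω, Real.exp (-∑ j, U ω j) ∂μ)
      ∧ ((∀ᵐ ω ∂μ, U ω i = 0) → c i = 0)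
      ∧ (¬ (∀ᵐ ω ∂μ, U ω i = 0) → 0 < c i) := by
  intro i
  have hU0 := hPo.2.2.1
  have hP0 := hPo.measureReal_eq_integral 0
  have hP1 := hPo.measureReal_eq_integral (Pi.single i 1)
  have hint0 := hPo.integrable_poissonLikelihood 0
  have hint1 := hPo.integrable_poissonLikelihood (Pi.single i 1)
  simp only [poissonLikelihood_zero, poissonLikelihood_single] at hP0 hP1 hint0 hint1
  have hden : 0 < ∫ ω, exp (-∑ j, U ω j) ∂μ := integral_exp_pos hint0
  have hY0 : μ {ω | Y ω = 0} ≠ 0 := fun h => by simp [h, hden.ne] at hP0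
  have hc : c i = (∫ ω, U ω i * exp (-∑ j, U ω j) ∂μ) / ∫ ω, exp (-∑ j, U ω j) ∂μ := by
    have h := hlin 0 hY0 i
    rw [hPo.condExpEvent_eq 0 (measurable_pi_apply i)] at h
    simpa [poissonLikelihood_zero] using h.symm
  have hnum := integral_mul_eq_zero_iff_of_pos (fun ω => hU0 ω i)
    (fun ω => exp_pos (-∑ j, U ω j)) hint1
  refine ⟨by rw [hc, hP0, hP1], hc, fun h => by rw [hc, hnum.2 h, zero_div], fun h => ?_⟩
  refine hc ▸ div_pos (lt_of_le_of_ne ?_ (Ne.symm (mt hnum.1 h))) hden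
  exact integral_nonneg fun ω => mul_nonneg (hU0 ω i) (exp_pos _).le
end
end

section
/- Let X be a random vector in ℝ^n with E[‖X‖] < ∞ and characteristic function φ_X(t) = E[e^{i tᵀX}], and let Σ ∈ ℝ^{n×n} be a symmetric positive semidefinite matrix. Then for every t ∈ ℝ^n: | φ_X(t) − e^{−tᵀΣt/2} | ≤ ‖t‖ · max_{τ ∈ [0,1]} ‖ ∇φ_X(τ t) + τ Σ t φ_X(τ t) ‖. -/
open MeasureTheory ProbabilityTheory

noncomputable section

/-- Euclidean norm of a real vector. -/
def eNormR {n : ℕ} (v : Fin n → ℝ) : ℝ := Real.sqrt (∑ i, v i ^ 2)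

/-- Euclidean norm of a complex vector. -/
def eNormC {n : ℕ} (v : Fin n → ℂ) : ℝ := Real.sqrt (∑ i, ‖v i‖ ^ 2)

/-- The characteristic function `φ_V(t) = E[e^{i tᵀ V}]` of a random vector `V`. -/
def charFunVec {Ω : Type} [MeasurableSpace Ω] (μ : Measure Ω) {n : ℕ}
    (V : Ω → Fin n → ℝ) (t : Fin n → ℝ) : ℂ :=
  ∫ ω, Complex.exp (Complex.I * ((∑ k, t k * V ω k : ℝ) : ℂ)) ∂μ

/-- The gradient `∇φ_V(t) = E[i V e^{i tᵀ V}]` of the characteristic function of `V`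
(valid when `E‖V‖ < ∞`). -/
def gradCharFunVec {Ω : Type} [MeasurableSpace Ω] (μ : Measure Ω) {n : ℕ}
    (V : Ω → Fin n → ℝ) (t : Fin n → ℝ) : Fin n → ℂ := fun j =>
  ∫ ω, Complex.I * (V ω j : ℂ) * Complex.exp (Complex.I * ((∑ k, t k * V ω k : ℝ) : ℂ)) ∂μ

/-!
Put `f τ = φ_X(τ t)` and `q = tᵀΣt ≥ 0`. Differentiating under the integral (dominated by
`‖t‖ ‖X‖`), `f' τ = tᵀ ∇φ_X(τ t)`, so `f' τ + τ q f τ = tᵀ (∇φ_X(τ t) + τ Σ t φ_X(τ t))`, whose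
modulus is at most `‖t‖ M` by Cauchy–Schwarz. With the integrating factor `e^{τ²q/2}` this is
`e^{-τ²q/2} (f τ e^{τ²q/2})'`, so the mean value inequality on `[0, 1]` gives
`|f 1 e^{q/2} - f 0| ≤ e^{q/2} ‖t‖ M`; divide by `e^{q/2}` and use `f 0 = 1`.
-/

lemma abs_le_eNormR {n : ℕ} (v : Fin n → ℝ) (j : Fin n) : |v j| ≤ eNormR v := by
  rw [eNormR, ← Real.sqrt_sq_eq_abs]
  exact Real.sqrt_le_sqrt <|
    Finset.single_le_sum (f := fun i => v i ^ 2) (fun i _ => sq_nonneg _) (Finset.mem_univ j)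

lemma norm_sum_ofReal_mul_le {n : ℕ} (t : Fin n → ℝ) (w : Fin n → ℂ) :
    ‖∑ j, (t j : ℂ) * w j‖ ≤ eNormR t * eNormC w :=
  calc ‖∑ j, (t j : ℂ) * w j‖
      ≤ ∑ j, |t j| * ‖w j‖ := (norm_sum_le _ _).trans_eq (by simp)
    _ ≤ eNormR t * eNormC w := by
      simpa [eNormR, eNormC, sq_abs] using
        Real.sum_mul_le_sqrt_mul_sqrt Finset.univ (fun j => |t j|) (fun j => ‖w j‖)

lemma HasDerivAt.mul_exp_sq_mul_div_two {f : ℝ → ℂ} {f' : ℂ} {q τ : ℝ}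
    (hf : HasDerivAt f f' τ) :
    HasDerivAt (fun x => f x * ((Real.exp (x ^ 2 * q / 2) : ℝ) : ℂ))
      (((Real.exp (τ ^ 2 * q / 2) : ℝ) : ℂ) * (f' + ((τ * q : ℝ) : ℂ) * f τ)) τ := by
  have hE := (((hasDerivAt_pow 2 τ).mul_const q).div_const 2).exp.ofReal_comp
  exact (hf.mul hE).congr_deriv (by push_cast; ring)

lemma norm_sub_exp_mul_le_of_hasDerivAt {f f' : ℝ → ℂ} {q K : ℝ} (hq : 0 ≤ q)
    (hf : ∀ τ ∈ Set.Icc (0 : ℝ) 1, HasDerivAt f (f' τ) τ)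
    (hK : ∀ τ ∈ Set.Icc (0 : ℝ) 1, ‖f' τ + ((τ * q : ℝ) : ℂ) * f τ‖ ≤ K) :
    ‖f 1 - ((Real.exp (-q / 2) : ℝ) : ℂ) * f 0‖ ≤ K := by
  have hderiv_le : ∀ τ ∈ Set.Icc (0 : ℝ) 1,
      ‖((Real.exp (τ ^ 2 * q / 2) : ℝ) : ℂ) * (f' τ + ((τ * q : ℝ) : ℂ) * f τ)‖ ≤
        Real.exp (q / 2) * K := fun τ hτ => by
    have hτ2 : τ ^ 2 ≤ 1 := by nlinarith [hτ.1, hτ.2]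
    rw [norm_mul, Complex.norm_real, Real.norm_of_nonneg (Real.exp_pos _).le]
    exact mul_le_mul (Real.exp_le_exp.2 (by nlinarith [mul_le_mul_of_nonneg_right hτ2 hq]))
      (hK τ hτ) (norm_nonneg _) (Real.exp_pos _).le
  have hmvt := (convex_Icc (0 : ℝ) 1).norm_image_sub_le_of_norm_hasDerivWithin_le
    (fun τ hτ => (hf τ hτ).mul_exp_sq_mul_div_two.hasDerivWithinAt) hderiv_le
    (Set.left_mem_Icc.2 zero_le_one) (Set.right_mem_Icc.2 zero_le_one)
  have hinv : Real.exp (-q / 2) * Real.exp (q / 2) = 1 := by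
    rw [← Real.exp_add, neg_div, neg_add_cancel, Real.exp_zero]
  have hsplit : f 1 - ((Real.exp (-q / 2) : ℝ) : ℂ) * f 0 =
      ((Real.exp (-q / 2) : ℝ) : ℂ) * (f 1 * ((Real.exp (q / 2) : ℝ) : ℂ) - f 0) := by
    have h := congrArg Complex.ofReal hinv
    rw [Complex.ofReal_mul, Complex.ofReal_one] at h
    linear_combination (-(f 1)) * h
  calc ‖f 1 - ((Real.exp (-q / 2) : ℝ) : ℂ) * f 0‖
      = Real.exp (-q / 2) * ‖f 1 * ((Real.exp (q / 2) : ℝ) : ℂ) - f 0‖ := by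
        rw [hsplit, norm_mul, Complex.norm_real, Real.norm_of_nonneg (Real.exp_pos _).le]
    _ ≤ Real.exp (-q / 2) * (Real.exp (q / 2) * K) := by
        gcongr
        simpa using hmvt
    _ = K := by rw [← mul_assoc, hinv, one_mul]

section CharFun

variable {Ω : Type} [MeasurableSpace Ω] {μ : Measure Ω}

lemma hasDerivAt_integral_cexp_I_mul [IsFiniteMeasure μ] {s : Ω → ℝ} (hs : Integrable s μ)
    (τ₀ : ℝ) :
    HasDerivAt (fun τ : ℝ => ∫ ω, Complex.exp (Complex.I * ((τ * s ω : ℝ) : ℂ)) ∂μ)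
      (∫ ω, Complex.I * (s ω : ℂ) * Complex.exp (Complex.I * ((τ₀ * s ω : ℝ) : ℂ)) ∂μ) τ₀ := by
  have hmeas : ∀ τ : ℝ,
      AEStronglyMeasurable (fun ω => Complex.exp (Complex.I * ((τ * s ω : ℝ) : ℂ))) μ :=
    fun τ => (by fun_prop : Continuous fun x : ℝ => Complex.exp (Complex.I * ((τ * x : ℝ) : ℂ)))
      |>.comp_aestronglyMeasurable hs.aestronglyMeasurable
  refine (hasDerivAt_integral_of_dominated_loc_of_deriv_le Filter.univ_mem (.of_forall hmeas)
    ((integrable_const 1).mono' (hmeas τ₀) (ae_of_all _ fun ω => ?_))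
    (F' := fun τ ω => Complex.I * (s ω : ℂ) * Complex.exp (Complex.I * ((τ * s ω : ℝ) : ℂ)))
    (((Complex.continuous_ofReal.comp_aestronglyMeasurable hs.aestronglyMeasurable).const_mul
      Complex.I).mul (hmeas τ₀))
    (ae_of_all _ fun ω τ _ => ?_) hs.norm (ae_of_all _ fun ω τ _ => ?_)).2
  · simp [Complex.norm_exp]
  · simp [Complex.norm_exp]
  · exact (((hasDerivAt_mul_const (s ω)).ofReal_comp).const_mul Complex.I).cexp.congr_deriv
      (by ring)

variable {n : ℕ} {X : Ω → Fin n → ℝ}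

lemma sum_smul_mul_eq (t v : Fin n → ℝ) (τ : ℝ) : ∑ k, (τ • t) k * v k = τ * (t ⬝ᵥ v) := by
  simp only [dotProduct, Pi.smul_apply, smul_eq_mul, Finset.mul_sum, mul_assoc]

lemma charFunVec_smul (t : Fin n → ℝ) (τ : ℝ) :
    charFunVec μ X (τ • t) = ∫ ω, Complex.exp (Complex.I * ((τ * (t ⬝ᵥ X ω) : ℝ) : ℂ)) ∂μ := by
  simp only [charFunVec, sum_smul_mul_eq]

lemma charFunVec_zero [IsProbabilityMeasure μ] : charFunVec μ X 0 = 1 := by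
  simp [charFunVec]

lemma integrable_apply_of_integrable_eNormR (hX : Measurable X)
    (hint : Integrable (fun ω => eNormR (X ω)) μ) (j : Fin n) : Integrable (fun ω => X ω j) μ :=
  hint.mono' hX.eval.aestronglyMeasurable (ae_of_all _ fun ω => abs_le_eNormR (X ω) j)

lemma integrable_dotProduct_of_integrable_eNormR (hX : Measurable X)
    (hint : Integrable (fun ω => eNormR (X ω)) μ) (t : Fin n → ℝ) :
    Integrable (fun ω => t ⬝ᵥ X ω) μ := by
  simpa only [dotProduct] using integrable_finsetSum Finset.univ fun j _ =>
    (integrable_apply_of_integrable_eNormR hX hint j).const_mul (t j)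

lemma sum_mul_gradCharFunVec_smul (hX : Measurable X)
    (hint : Integrable (fun ω => eNormR (X ω)) μ) (t : Fin n → ℝ) (τ : ℝ) :
    ∑ j, (t j : ℂ) * gradCharFunVec μ X (τ • t) j =
      ∫ ω, Complex.I * ((t ⬝ᵥ X ω : ℝ) : ℂ) *
        Complex.exp (Complex.I * ((τ * (t ⬝ᵥ X ω) : ℝ) : ℂ)) ∂μ := by
  have hint_j : ∀ j, Integrable (fun ω => (t j : ℂ) * (Complex.I * (X ω j : ℂ) *
      Complex.exp (Complex.I * ((τ * (t ⬝ᵥ X ω) : ℝ) : ℂ)))) μ := fun j =>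
    (((integrable_apply_of_integrable_eNormR hX hint j).ofReal.const_mul Complex.I).mul_bdd
      (by fun_prop) (ae_of_all _ fun ω => (Complex.norm_exp_I_mul_ofReal _).le)).const_mul _
  simp only [gradCharFunVec, sum_smul_mul_eq, ← integral_const_mul]
  rw [← integral_finsetSum _ fun j _ => hint_j j]
  refine integral_congr_ae (ae_of_all _ fun ω => ?_)
  simp only [dotProduct, Complex.ofReal_sum, Complex.ofReal_mul, Finset.mul_sum, Finset.sum_mul]
  exact Finset.sum_congr rfl fun j _ => by ring

lemma hasDerivAt_charFunVec_smul [IsFiniteMeasure μ] (hX : Measurable X)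
    (hint : Integrable (fun ω => eNormR (X ω)) μ) (t : Fin n → ℝ) (τ : ℝ) :
    HasDerivAt (fun τ : ℝ => charFunVec μ X (τ • t))
      (∑ j, (t j : ℂ) * gradCharFunVec μ X (τ • t) j) τ := by
  simp only [charFunVec_smul, sum_mul_gradCharFunVec_smul hX hint]
  exact hasDerivAt_integral_cexp_I_mul (integrable_dotProduct_of_integrable_eNormR hX hint t) τ

end CharFun

/-- for a random vector `X` with `E‖X‖ < ∞` and a symmetric positive
semidefinite `Σ`, for every `t`,
`|φ_X(t) - e^{-tᵀΣt/2}| ≤ ‖t‖ ⬝ max_{τ ∈ [0,1]} ‖∇φ_X(τt) + τ Σ t φ_X(τt)‖`. -/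
theorem stmt18 {Ω : Type} [MeasurableSpace Ω] (μ : Measure Ω) [IsProbabilityMeasure μ]
    {n : ℕ} (X : Ω → Fin n → ℝ) (hX : Measurable X)
    (hint : Integrable (fun ω => eNormR (X ω)) μ)
    (S : Matrix (Fin n) (Fin n) ℝ) (hS : S.PosSemidef) :
    ∀ t : Fin n → ℝ, ∀ M : ℝ,
      (∀ τ : ℝ, τ ∈ Set.Icc (0 : ℝ) 1 →
        eNormC (fun j => gradCharFunVec μ X (τ • t) j
            + ((τ * S.mulVec t j : ℝ) : ℂ) * charFunVec μ X (τ • t)) ≤ M) →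
      ‖(charFunVec μ X t
          - ((Real.exp (-(dotProduct t (S.mulVec t)) / 2) : ℝ) : ℂ))‖
        ≤ eNormR t * M := by
  intro t M hM
  have hq : 0 ≤ t ⬝ᵥ S.mulVec t := by simpa using hS.dotProduct_mulVec_nonneg t
  have hbound : ∀ τ ∈ Set.Icc (0 : ℝ) 1,
      ‖∑ j, (t j : ℂ) * gradCharFunVec μ X (τ • t) j
        + ((τ * (t ⬝ᵥ S.mulVec t) : ℝ) : ℂ) * charFunVec μ X (τ • t)‖ ≤ eNormR t * M := by
    intro τ hτ
    have hsum : ∑ j, (t j : ℂ) * gradCharFunVec μ X (τ • t) j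
        + ((τ * (t ⬝ᵥ S.mulVec t) : ℝ) : ℂ) * charFunVec μ X (τ • t) =
        ∑ j, (t j : ℂ) * (gradCharFunVec μ X (τ • t) j
          + ((τ * S.mulVec t j : ℝ) : ℂ) * charFunVec μ X (τ • t)) := by
      simp only [dotProduct, Complex.ofReal_mul, Complex.ofReal_sum, Finset.mul_sum,
        Finset.sum_mul, mul_add, Finset.sum_add_distrib]
      congr 1
      exact Finset.sum_congr rfl fun j _ => by ring
    rw [hsum]
    exact (norm_sum_ofReal_mul_le t _).trans
      (mul_le_mul_of_nonneg_left (hM τ hτ) (Real.sqrt_nonneg _))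
  simpa [charFunVec_zero, neg_div] using norm_sub_exp_mul_le_of_hasDerivAt hq
    (fun τ _ => hasDerivAt_charFunVec_smul hX hint t τ) hbound
end
end
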